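/- Under the hypotheses of the weighted ratio bound, if equality holds for an independent set S of size |S| = v/(1 − d/τ) with characteristic vector v_S, then v_S − (|S|/v)·𝟙 is an eigenvector of A with eigenvalue τ, where 𝟙 is the all-ones vector. -/

import Mathlib

/-!
Put `x = v_S - (|S|/v) 𝟙`. Because `A` vanishes on `S × S` and has all row and column sums
equal to `d`, `xᵀ A x = -d |S|² / v`, while `xᵀ x = |S| (v - |S|) / v`; attaining the bound
says exactly that `xᵀ A x = τ xᵀ x`. As `τ` is the least eigenvalue, `A - τ I` is positive
semidefinite, and a vector on which a positive semidefinite form vanishes lies in its kernel.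
-/

open Matrix

namespace Matrix

variable {V R : Type*} [Fintype V]

theorem mulVec_one_eq_smul_of_sum_row_eq [NonAssocSemiring R] {A : Matrix V V R} {d : R}
    (hrow : ∀ i, ∑ j, A i j = d) : A *ᵥ 1 = d • 1 := by
  ext i
  simp [mulVec, dotProduct, hrow]

theorem dotProduct_mulVec_indicator_eq_zero [DecidableEq V] [NonAssocSemiring R]
    {A : Matrix V V R} {S : Finset V} (hS : ∀ i ∈ S, ∀ j ∈ S, A i j = 0) :
    (fun i => if i ∈ S then (1 : R) else 0) ⬝ᵥ
      A *ᵥ (fun i => if i ∈ S then (1 : R) else 0) = 0 := by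
  simp only [dotProduct, mulVec, mul_ite, mul_one, mul_zero, ite_mul, one_mul, zero_mul,
    Finset.sum_ite_mem, Finset.univ_inter]
  exact Finset.sum_eq_zero fun i hi => Finset.sum_eq_zero fun j hj => hS i hi j hj

theorem IsSymm.dotProduct_mulVec_sub_smul_one [CommRing R] {A : Matrix V V R} (hA : A.IsSymm)
    {d : R} (hrow : A *ᵥ 1 = d • 1) (y : V → R) (c : R) :
    (y - c • 1) ⬝ᵥ A *ᵥ (y - c • 1) =
      y ⬝ᵥ A *ᵥ y - 2 * c * d * ∑ i, y i + c ^ 2 * d * Fintype.card V := by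
  have hcol : 1 ⬝ᵥ A *ᵥ y = d * ∑ i, y i := by
    rw [dotProduct_mulVec, ← mulVec_transpose, hA.eq, hrow, smul_dotProduct, one_dotProduct,
      smul_eq_mul]
  simp only [mulVec_sub, mulVec_smul, sub_dotProduct, dotProduct_sub, smul_dotProduct,
    dotProduct_smul, hrow, hcol, dotProduct_one, Pi.sub_apply, Pi.smul_apply, Pi.one_apply,
    Finset.sum_sub_distrib, Finset.sum_const, Finset.card_univ, nsmul_eq_mul]
  ring

theorem IsHermitian.posSemidef_sub_smul_one [DecidableEq V] {A : Matrix V V ℝ}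
    (hA : A.IsHermitian) {τ : ℝ}
    (hτ : ∀ (μ : ℝ) (x : V → ℝ), x ≠ 0 → A *ᵥ x = μ • x → τ ≤ μ) :
    (A - τ • 1).PosSemidef := by
  have hB : (A - τ • 1).IsHermitian := hA.sub (isHermitian_one.smul (.all τ))
  refine hB.posSemidef_iff_eigenvalues_nonneg.mpr fun j => ?_
  set w := (hB.eigenvectorBasis j).ofLp
  have hw : w ≠ 0 := fun h =>
    hB.eigenvectorBasis.orthonormal.ne_zero j (by ext i; exact congrFun h i)
  have hAw : A *ᵥ w = (hB.eigenvalues j + τ) • w := by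
    have := hB.mulVec_eigenvectorBasis j
    rw [sub_mulVec, smul_mulVec, one_mulVec, sub_eq_iff_eq_add] at this
    rw [this, add_smul]
  simpa using hτ _ w hw hAw

theorem IsHermitian.mulVec_eq_smul_of_dotProduct_mulVec_eq {A : Matrix V V ℝ}
    (hA : A.IsHermitian) {τ : ℝ}
    (hτ : ∀ (μ : ℝ) (x : V → ℝ), x ≠ 0 → A *ᵥ x = μ • x → τ ≤ μ)
    {x : V → ℝ} (hx : x ⬝ᵥ A *ᵥ x = τ * (x ⬝ᵥ x)) : A *ᵥ x = τ • x := by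
  classical
  have h := (hA.posSemidef_sub_smul_one hτ).dotProduct_mulVec_zero_iff x
  rw [star_trivial, sub_mulVec, smul_mulVec, one_mulVec, dotProduct_sub, dotProduct_smul, hx,
    smul_eq_mul, sub_self, sub_eq_zero] at h
  exact h.mp rfl

end Matrix

theorem weighted_ratio_bound_equality_general {V : Type*} [Fintype V] [DecidableEq V]
    (G : SimpleGraph V) (A : Matrix V V ℝ) (d τ : ℝ)
    (hsym : A.IsSymm)
    (hA0 : ∀ i j : V, ¬ G.Adj i j → A i j = 0)
    (hrow : ∀ i : V, ∑ j : V, A i j = d)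
    (hτmin : ∀ (μ : ℝ) (x : V → ℝ), x ≠ 0 → A.mulVec x = μ • x → τ ≤ μ)
    (hτneg : τ < 0)
    (S : Finset V) (hS : ∀ i ∈ S, ∀ j ∈ S, ¬ G.Adj i j)
    (hcard : (S.card : ℝ) = (Fintype.card V : ℝ) / (1 - d / τ)) :
    A.mulVec
        ((fun i => if i ∈ S then (1 : ℝ) else 0) -
          ((S.card : ℝ) / (Fintype.card V : ℝ)) • (fun _ => (1 : ℝ))) =
      τ • ((fun i => if i ∈ S then (1 : ℝ) else 0) -
          ((S.card : ℝ) / (Fintype.card V : ℝ)) • (fun _ => (1 : ℝ))) := by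
  rcases isEmpty_or_nonempty V with _ | _
  · exact Subsingleton.elim _ _
  set χ : V → ℝ := fun i => if i ∈ S then 1 else 0
  set s : ℝ := (S.card : ℝ)
  set v : ℝ := (Fintype.card V : ℝ) with hv_def
  have hv : v ≠ 0 := Nat.cast_ne_zero.mpr Fintype.card_ne_zero
  have hS_sum : ∑ i, χ i = s := by simp [χ, s]
  have hS_sq : χ ⬝ᵥ χ = s := by simp [χ, s, dotProduct]
  have hattain : s * (s * (τ - d) - τ * v) = 0 := by
    -- for `d = τ` the bound reads `|S| = v / 0 = 0`
    rcases eq_or_ne d τ with rfl | hdτ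
    · simp [s, hcard, div_self hτneg.ne]
    · rw [one_sub_div hτneg.ne, div_div_eq_mul_div,
        eq_div_iff (sub_ne_zero.mpr hdτ.symm)] at hcard
      linear_combination s * hcard
  have hrow1 := mulVec_one_eq_smul_of_sum_row_eq hrow
  change A *ᵥ (χ - (s / v) • 1) = τ • (χ - (s / v) • 1)
  refine (isHermitian_iff_isSymm.mpr hsym).mulVec_eq_smul_of_dotProduct_mulVec_eq hτmin ?_
  -- the squared norm is the case `A = 1`, `d = 1` of the same expansion
  have hnorm := isSymm_one.dotProduct_mulVec_sub_smul_one
    ((one_mulVec 1).trans (one_smul ℝ 1).symm) χ (s / v)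
  rw [one_mulVec, one_mulVec] at hnorm
  rw [hsym.dotProduct_mulVec_sub_smul_one hrow1, hnorm,
    dotProduct_mulVec_indicator_eq_zero fun i hi j hj => hA0 i j (hS i hi j hj), hS_sum, hS_sq,
    ← hv_def]
  field_simp
  linear_combination hattain

/-- Equality in the weighted ratio bound: under the hypotheses of the weighted
ratio bound, if an independent set `S` attains the bound
`|S| = v / (1 - d/τ)`, then `v_S - (|S|/v)·𝟙` is a `τ`-eigenvector of `A`,
where `v_S` is the characteristic vector of `S`. -/
theorem weighted_ratio_bound_equality {V : Type*} [Fintype V] [DecidableEq V]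
    (G : SimpleGraph V) (A : Matrix V V ℝ) (d τ : ℝ)
    (hsym : A.IsSymm)
    (hA0 : ∀ i j : V, ¬ G.Adj i j → A i j = 0)
    (hrow : ∀ i : V, ∑ j : V, A i j = d)
    (hτeig : ∃ x : V → ℝ, x ≠ 0 ∧ A.mulVec x = τ • x)
    (hτmin : ∀ (μ : ℝ) (x : V → ℝ), x ≠ 0 → A.mulVec x = μ • x → τ ≤ μ)
    (hτneg : τ < 0) (hd : 0 < d)
    (S : Finset V) (hS : ∀ i ∈ S, ∀ j ∈ S, ¬ G.Adj i j)
    (hcard : (S.card : ℝ) = (Fintype.card V : ℝ) / (1 - d / τ)) :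
    A.mulVec
        ((fun i => if i ∈ S then (1 : ℝ) else 0) -
          ((S.card : ℝ) / (Fintype.card V : ℝ)) • (fun _ => (1 : ℝ))) =
      τ • ((fun i => if i ∈ S then (1 : ℝ) else 0) -
          ((S.card : ℝ) / (Fintype.card V : ℝ)) • (fun _ => (1 : ℝ))) :=
  weighted_ratio_bound_equality_general G A d τ hsym hA0 hrow hτmin hτneg S hS hcard
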